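/- Let A be an associative R-algebra with a double bracket ⟨⟨−,−⟩⟩ : A ⊗ A → A ⊗ A (a derivation for the outer bimodule structure in its second argument, skew-symmetric in the sense ⟨⟨a,b⟩⟩ = −⟨⟨b,a⟩⟩° where (u⊗v)° = v⊗u) satisfying the double Jacobi identity. Define the associated bracket {a,b} = m(⟨⟨a,b⟩⟩), where m is multiplication. Then (A, {−,−}) is a left Loday algebra: {a,{b,c}} = {{a,b},c} + {b,{a,c}} for all a,b,c ∈ A. -/
import Mathlib


/-!
STATEMENT 9: If `⟨⟨−,−⟩⟩` is a double Poisson bracket on an associative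
`R`-algebra `A` (derivation in its second argument for the outer bimodule
structure, skew-symmetric, satisfying the double Jacobi identity), then the
associated bracket `{a,b} = m(⟨⟨a,b⟩⟩)` makes `A` a left Loday algebra.
-/

open TensorProduct

noncomputable section
namespace Stmt9

variable (k : Type) [Field k] (A : Type) [Ring A] [Algebra k A]

/-- The cyclic permutation `σ₍₁₂₃₎` on `A ⊗ A ⊗ A`: `(x⊗y)⊗z ↦ (z⊗x)⊗y`. -/
def cyc : (A ⊗[k] A) ⊗[k] A →ₗ[k] (A ⊗[k] A) ⊗[k] A :=
  (TensorProduct.assoc k A A A).symm.toLinearMap ∘ₗ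
    (TensorProduct.comm k (A ⊗[k] A) A).toLinearMap

/-- `⟨⟨a, −⟩⟩_L` : apply `⟨⟨a,−⟩⟩` to the first tensor factor. -/
def extL (D : A →ₗ[k] A →ₗ[k] A ⊗[k] A) (a : A) :
    A ⊗[k] A →ₗ[k] (A ⊗[k] A) ⊗[k] A :=
  LinearMap.rTensor A (D a)

/-! ### Auxiliary material for the proof -/

/-- Total multiplication `(x⊗y)⊗z ↦ xyz`. -/
def m3 : (A ⊗[k] A) ⊗[k] A →ₗ[k] A :=
  LinearMap.mul' k A ∘ₗ LinearMap.rTensor A (LinearMap.mul' k A)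

/-- `t ↦ Σ m(⟨⟨a,t₁⟩⟩) t₂`. -/
def Pm (D : A →ₗ[k] A →ₗ[k] A ⊗[k] A) (a : A) : A ⊗[k] A →ₗ[k] A :=
  LinearMap.mul' k A ∘ₗ LinearMap.rTensor A (LinearMap.mul' k A ∘ₗ D a)

/-- `t ↦ Σ t₂ m(⟨⟨a,t₁⟩⟩)`. -/
def Pcm (D : A →ₗ[k] A →ₗ[k] A ⊗[k] A) (a : A) : A ⊗[k] A →ₗ[k] A :=
  LinearMap.mul' k A ∘ₗ (TensorProduct.comm k A A).toLinearMap ∘ₗ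
    LinearMap.rTensor A (LinearMap.mul' k A ∘ₗ D a)

/-- `t ↦ Σ ⟨⟨a,t₁⟩⟩'' t₂ ⟨⟨a,t₁⟩⟩'`. -/
def Rm (D : A →ₗ[k] A →ₗ[k] A ⊗[k] A) (a : A) : A ⊗[k] A →ₗ[k] A :=
  m3 k A ∘ₗ cyc k A ∘ₗ cyc k A ∘ₗ extL k A D a

@[simp] lemma m3_tmul (u v w : A) :
    m3 k A ((u ⊗ₜ[k] v) ⊗ₜ[k] w) = u * v * w := by
  simp [m3, LinearMap.mul'_apply]

@[simp] lemma cyc_tmul (u v w : A) :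
    cyc k A ((u ⊗ₜ[k] v) ⊗ₜ[k] w) = (w ⊗ₜ[k] u) ⊗ₜ[k] v := rfl

@[simp] lemma Pm_tmul (D : A →ₗ[k] A →ₗ[k] A ⊗[k] A) (a b c : A) :
    Pm k A D a (b ⊗ₜ[k] c) = LinearMap.mul' k A (D a b) * c := by
  simp [Pm, LinearMap.mul'_apply]

@[simp] lemma Pcm_tmul (D : A →ₗ[k] A →ₗ[k] A ⊗[k] A) (a b c : A) :
    Pcm k A D a (b ⊗ₜ[k] c) = c * LinearMap.mul' k A (D a b) := by
  simp [Pcm, LinearMap.mul'_apply]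

lemma mul'_mul_right (t : A ⊗[k] A) (c : A) :
    LinearMap.mul' k A (t * ((1:A) ⊗ₜ[k] c)) = LinearMap.mul' k A t * c := by
  induction t using TensorProduct.induction_on with
  | zero => simp
  | tmul u v => simp [Algebra.TensorProduct.tmul_mul_tmul, mul_assoc]
  | add x y hx hy => simp [add_mul, hx, hy]

lemma mul'_mul_left (b : A) (t : A ⊗[k] A) :
    LinearMap.mul' k A ((b ⊗ₜ[k] (1:A)) * t) = b * LinearMap.mul' k A t := by
  induction t using TensorProduct.induction_on with
  | zero => simp
  | tmul u v => simp [Algebra.TensorProduct.tmul_mul_tmul, mul_assoc]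
  | add x y hx hy => simp [mul_add, hx, hy]

lemma l3 (s : A ⊗[k] A) (c : A) :
    LinearMap.mul' k A ((TensorProduct.comm k A A) (s * ((1:A) ⊗ₜ[k] c))) =
      m3 k A (cyc k A (cyc k A (s ⊗ₜ[k] c))) := by
  induction s using TensorProduct.induction_on with
  | zero => simp
  | tmul u v =>
      simp [Algebra.TensorProduct.tmul_mul_tmul, mul_assoc, cyc, m3,
        LinearMap.mul'_apply]
  | add x y hx hy => simp_all [add_mul, add_tmul]

lemma l4 (b : A) (s : A ⊗[k] A) :
    LinearMap.mul' k A ((TensorProduct.comm k A A) ((b ⊗ₜ[k] (1:A)) * s)) =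
      m3 k A (cyc k A (cyc k A (s ⊗ₜ[k] b))) := by
  induction s using TensorProduct.induction_on with
  | zero => simp
  | tmul u v =>
      simp [Algebra.TensorProduct.tmul_mul_tmul, mul_assoc, cyc, m3,
        LinearMap.mul'_apply]
  | add x y hx hy => simp_all [mul_add, add_tmul]

lemma H1 (D : A →ₗ[k] A →ₗ[k] A ⊗[k] A)
    (hLeibniz : ∀ a b c : A,
      D a (b * c) = D a b * ((1 : A) ⊗ₜ[k] c) + (b ⊗ₜ[k] (1 : A)) * D a c)
    (a : A) (t : A ⊗[k] A) :
    LinearMap.mul' k A (D a (LinearMap.mul' k A t)) =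
      Pm k A D a t + Pcm k A D a ((TensorProduct.comm k A A) t) := by
  induction t using TensorProduct.induction_on with
  | zero => simp
  | tmul b c =>
      rw [LinearMap.mul'_apply, hLeibniz a b c, map_add, mul'_mul_right,
        mul'_mul_left]
      simp
  | add x y hx hy => simp_all [map_add]; abel

lemma H5 (D : A →ₗ[k] A →ₗ[k] A ⊗[k] A)
    (hLeibniz : ∀ a b c : A,
      D a (b * c) = D a b * ((1 : A) ⊗ₜ[k] c) + (b ⊗ₜ[k] (1 : A)) * D a c)
    (x : A) (t : A ⊗[k] A) :
    LinearMap.mul' k A ((TensorProduct.comm k A A) (D x (LinearMap.mul' k A t))) =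
      Rm k A D x t + Rm k A D x ((TensorProduct.comm k A A) t) := by
  induction t using TensorProduct.induction_on with
  | zero => simp
  | tmul b c =>
      rw [LinearMap.mul'_apply, hLeibniz x b c, map_add, map_add, l3, l4]
      simp [Rm, extL]
  | add u v hu hv => simp_all [map_add]; abel

lemma H2 (D : A →ₗ[k] A →ₗ[k] A ⊗[k] A) (a : A) (t : A ⊗[k] A) :
    m3 k A (extL k A D a t) = Pm k A D a t := by
  induction t using TensorProduct.induction_on with
  | zero => simp
  | tmul b c =>
      simp only [extL, LinearMap.rTensor_tmul, Pm, LinearMap.comp_apply]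
      induction (D a b) using TensorProduct.induction_on with
      | zero => simp
      | tmul u v => simp
      | add x y hx hy => simp_all [add_tmul]
  | add x y hx hy => simp_all [map_add]

lemma H3 (D : A →ₗ[k] A →ₗ[k] A ⊗[k] A) (a : A) (t : A ⊗[k] A) :
    m3 k A (cyc k A (extL k A D a t)) = Pcm k A D a t := by
  induction t using TensorProduct.induction_on with
  | zero => simp
  | tmul b c =>
      simp only [extL, LinearMap.rTensor_tmul, Pcm, LinearMap.comp_apply]
      induction (D a b) using TensorProduct.induction_on with
      | zero => simp
      | tmul u v => simp [LinearMap.mul'_apply, mul_assoc]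
      | add x y hx hy => simp_all [add_tmul]
  | add x y hx hy => simp_all [map_add]

lemma cyc3 (t : (A ⊗[k] A) ⊗[k] A) :
    cyc k A (cyc k A (cyc k A t)) = t := by
  induction t using TensorProduct.induction_on with
  | zero => simp
  | tmul x z =>
      induction x using TensorProduct.induction_on with
      | zero => simp
      | tmul u v => rfl
      | add x y hx hy => simp_all [add_tmul]
  | add x y hx hy => simp_all

theorem statement9
    (R : Type) [Ring R] [Algebra k R] (ρ : R →ₐ[k] A)
    (D : A →ₗ[k] A →ₗ[k] A ⊗[k] A)
    -- R-bilinearity: the bracket vanishes on the image of `R`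
    (hRlin : ∀ (r : R) (a : A), D a (ρ r) = 0)
    -- derivation in the second argument, for the outer bimodule structure
    (hLeibniz : ∀ a b c : A,
      D a (b * c) = D a b * ((1 : A) ⊗ₜ[k] c) + (b ⊗ₜ[k] (1 : A)) * D a c)
    -- skew-symmetry: `⟨⟨a,b⟩⟩ = −⟨⟨b,a⟩⟩°`
    (hSkew : ∀ a b : A, D a b = - (TensorProduct.comm k A A) (D b a))
    -- double Jacobi identity
    (hJacobi : ∀ a b c : A,
      extL k A D a (D b c) + cyc k A (extL k A D b (D c a)) +
        cyc k A (cyc k A (extL k A D c (D a b))) = 0) :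
    -- the associated bracket `{a,b} = m(⟨⟨a,b⟩⟩)` satisfies the left Loday
    -- (Leibniz) identity `{a,{b,c}} = {{a,b},c} + {b,{a,c}}`.
    ∀ a b c : A,
      LinearMap.mul' k A (D a (LinearMap.mul' k A (D b c))) =
        LinearMap.mul' k A (D (LinearMap.mul' k A (D a b)) c) +
        LinearMap.mul' k A (D b (LinearMap.mul' k A (D a c))) := by
  intro a b c
  have hcommD : ∀ x y : A, (TensorProduct.comm k A A) (D x y) = - D y x := by
    intro x y
    rw [hSkew x y, map_neg]
    congr 1
    induction (D y x) using TensorProduct.induction_on with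
    | zero => simp
    | tmul u v => rfl
    | add s t hs ht => simp only [map_add, hs, ht]
  -- First consequence of the double Jacobi identity (for `a b c`)
  have J1 := congrArg (m3 k A) (hJacobi a b c)
  rw [map_add, map_add, map_zero, H2, H3] at J1
  have eZ : m3 k A (cyc k A (cyc k A (extL k A D c (D a b)))) =
      Rm k A D c (D a b) := rfl
  rw [eZ] at J1
  -- Second consequence, for `a c b`, after applying `m3 ∘ cyc`
  have J2 := congrArg (fun t => m3 k A (cyc k A t)) (hJacobi a c b)
  simp only [map_add, map_zero] at J2
  rw [H3, cyc3, H2] at J2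
  have eW : m3 k A (cyc k A (cyc k A (extL k A D c (D b a)))) =
      Rm k A D c (D b a) := rfl
  rw [eW] at J2
  -- Expand the three terms of the Loday identity
  rw [H1 k A D hLeibniz a (D b c), hcommD b c, map_neg]
  rw [H1 k A D hLeibniz b (D a c), hcommD a c, map_neg]
  rw [hSkew (LinearMap.mul' k A (D a b)) c, map_neg,
    H5 k A D hLeibniz c (D a b), hcommD a b, map_neg]
  -- Conclude by additive manipulation from J1 and J2
  have h := congrArg₂ (· - ·) J1 J2
  simp only [sub_zero] at h
  rw [← sub_eq_zero, ← h]
  abel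
end Stmt9
end
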